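/- arXiv:1706.01317 — 2 statements merged into one kernel-verified Lean document; each statement's English description precedes it below -/
import Mathlib

section
/- Let N and M be nonempty finite types, c : N → ℂ, d : M → ℂ, and let R : Matrix N M ℂ satisfy R i j = c i * d j for all i, j (i.e., R is an outer product, so its von Neumann entropy vanishes). Define ρ' : Matrix N N ℂ by ρ' i i' = (∑_j R i j) * conj (∑_{j'} R i' j'). If trace (R * Rᴴ) = 1 and trace ρ' = 1, then ρ' = R * Rᴴ. (Paper's Theorem 2: when the entanglement measure H(R) = 0, the pure-state density matrix built from the wave function coincides with the reduced density matrix.) -/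
open Matrix

/-- Paper's Theorem 2: when the relational matrix `R` is an outer product (zero entanglement
entropy), the normalized pure-state density matrix built from the wave function coincides with
the normalized reduced density matrix `R * Rᴴ`. -/
theorem pure_density_eq_reduced_density {N M : Type*} [Fintype N] [Fintype M]
    [Nonempty N] [Nonempty M]
    (c : N → ℂ) (d : M → ℂ) (R : Matrix N M ℂ) (hR : ∀ i j, R i j = c i * d j)
    (ρ' : Matrix N N ℂ)
    (hρ' : ∀ i i', ρ' i i' = (∑ j, R i j) * (starRingEnd ℂ) (∑ j', R i' j'))
    (h1 : (R * Rᴴ).trace = 1) (h2 : ρ'.trace = 1) :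
    ρ' = R * Rᴴ := by
  set A : ℂ := ∑ i, c i * (starRingEnd ℂ) (c i) with hA
  set S : ℂ := ∑ j, d j * (starRingEnd ℂ) (d j) with hSdef
  set T : ℂ := (∑ j, d j) * (starRingEnd ℂ) (∑ j, d j) with hTdef
  have hRR : ∀ i i', (R * Rᴴ) i i' = c i * (starRingEnd ℂ) (c i') * S := by
    intro i i'
    simp only [Matrix.mul_apply, Matrix.conjTranspose_apply, hR, hSdef, Finset.mul_sum]
    exact Finset.sum_congr rfl fun j _ => by
      simp only [starRingEnd_apply, StarMul.star_mul]; ring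
  have hρ : ∀ i i', ρ' i i' = c i * (starRingEnd ℂ) (c i') * T := by
    intro i i'
    simp only [hρ' i i', hR, ← Finset.mul_sum, _root_.map_mul, hTdef]
    ring
  have h1' : A * S = 1 := by
    rw [← h1]
    simp only [Matrix.trace, Matrix.diag, hRR, hA, Finset.sum_mul]
  have h2' : A * T = 1 := by
    rw [← h2]
    simp only [Matrix.trace, Matrix.diag, hρ, hA, Finset.sum_mul]
  have hAne : A ≠ 0 := by
    intro h
    rw [h, zero_mul] at h1'
    exact one_ne_zero h1'.symm
  have hST : S = T := by
    have := h1'.trans h2'.symm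
    exact mul_left_cancel₀ hAne this
  ext i i'
  rw [hρ, hRR, hST]
end

section
/- Let N and M be finite types, H_S : Matrix N N ℂ, H_A : Matrix M M ℂ, and R₀ : Matrix N M ℂ. Define R : ℝ → Matrix N M ℂ by R t = Matrix.exp ℂ ((-(Complex.I) * t) • H_S) * R₀ * Matrix.exp ℂ ((-(Complex.I) * t) • H_Aᵀ). Then for every t : ℝ, HasDerivAt R (-(Complex.I) • (H_S * R t + R t * H_Aᵀ)) t; equivalently, the relational matrix satisfies the generalized evolution equation i · (dR/dt) = H_S R(t) + R(t) H_Aᵀ. (Paper's Eq. (41), with ℏ = 1.) -/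
open Matrix NormedSpace

attribute [local instance] Matrix.linftyOpNormedAddCommGroup Matrix.linftyOpNormedSpace

attribute [local instance] Matrix.linftyOpNormedRing Matrix.linftyOpNormedAlgebra

namespace Matrix

variable {𝕜 α : Type*} [NontriviallyNormedField 𝕜] [NormedRing α] [NormedSpace 𝕜 α]
  [SMulCommClass 𝕜 α α] [IsScalarTower 𝕜 α α] {l m n : Type*} [Fintype l] [Fintype m] [Fintype n]

variable (𝕜 α l m n) in
noncomputable def linftyOpMulCLM : Matrix l m α →L[𝕜] Matrix m n α →L[𝕜] Matrix l n α :=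
  (mulLinearMap 𝕜).mkContinuous₂ 1 fun A B => by
    rw [one_mul]
    exact linfty_opNorm_mul A B

theorem _root_.HasDerivAt.matrix_mul {f : 𝕜 → Matrix l m α} {g : 𝕜 → Matrix m n α}
    {f' : Matrix l m α} {g' : Matrix m n α} {x : 𝕜} (hf : HasDerivAt f f' x)
    (hg : HasDerivAt g g' x) :
    HasDerivAt (fun y => f y * g y) (f' * g x + f x * g') x := by
  have h := (linftyOpMulCLM 𝕜 α l m n).hasDerivAt_of_bilinear (fun _ => hf) (fun _ => hg)
  exact h.congr_deriv (add_comm _ _)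

end Matrix

section ExpDeriv

variable {𝔸 : Type*} [NormedRing 𝔸] [NormedAlgebra ℂ 𝔸] [CompleteSpace 𝔸]

theorem hasDerivAt_exp_ofReal_mul_smul (c : ℂ) (A : 𝔸) (t : ℝ) :
    HasDerivAt (fun s : ℝ => exp ((c * s) • A)) (exp ((c * t) • A) * c • A) t := by
  have h := (hasDerivAt_exp_smul_const (c • A) (t : ℂ)).scomp t Complex.ofRealCLM.hasDerivAt
  simpa only [Function.comp_def, Complex.ofRealCLM_apply, Complex.ofReal_one, one_smul,
    smul_smul, mul_comm] using h

theorem hasDerivAt_exp_ofReal_mul_smul' (c : ℂ) (A : 𝔸) (t : ℝ) :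
    HasDerivAt (fun s : ℝ => exp ((c * s) • A)) (c • A * exp ((c * t) • A)) t := by
  have h := (hasDerivAt_exp_smul_const' (c • A) (t : ℂ)).scomp t Complex.ofRealCLM.hasDerivAt
  simpa only [Function.comp_def, Complex.ofRealCLM_apply, Complex.ofReal_one, one_smul,
    smul_smul, mul_comm] using h

end ExpDeriv

/-- Paper's Eq. (41) (`ℏ = 1`): `R t = exp(-i t H_S) R₀ exp(-i t H_Aᵀ)` satisfies the
generalized evolution equation `i dR/dt = H_S R(t) + R(t) H_Aᵀ`, i.e.
`dR/dt = -i (H_S R(t) + R(t) H_Aᵀ)`. -/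
theorem relational_matrix_evolution {N M : Type*} [Fintype N] [Fintype M]
    [DecidableEq N] [DecidableEq M]
    (HS : Matrix N N ℂ) (HA : Matrix M M ℂ) (R₀ : Matrix N M ℂ) (R : ℝ → Matrix N M ℂ)
    (hR : ∀ t : ℝ, R t =
      exp ((-Complex.I * (t : ℂ)) • HS) * R₀ * exp ((-Complex.I * (t : ℂ)) • HAᵀ)) :
    ∀ t : ℝ, HasDerivAt R ((-Complex.I) • (HS * R t + R t * HAᵀ)) t := by
  intro t
  rw [funext hR]
  have hU := hasDerivAt_exp_ofReal_mul_smul' (-Complex.I) HS t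
  have hV := hasDerivAt_exp_ofReal_mul_smul (-Complex.I) HAᵀ t
  refine ((hU.matrix_mul (hasDerivAt_const t R₀)).matrix_mul hV).congr_deriv ?_
  simp only [Matrix.mul_zero, add_zero, smul_add, Matrix.smul_mul, Matrix.mul_smul,
    Matrix.mul_assoc]
  -- the two sides differ only in instance paths (`linftyOpNormedRing` vs `Matrix.instRing`)
  rfl
end
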